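/- Let B be a C*-algebra, let W and Z be Hilbert C*-modules over B, let X ⊆ W and Y ⊆ Z be ℂ-linear subspaces, and let T : X → Y, S : Y → X be maps satisfying ⟨T(x) | y⟩ = ⟨x | S(y)⟩ for all x ∈ X, y ∈ Y. Then for every n ∈ ℕ, all x₁, …, x_n ∈ X and all b₁, …, b_n ∈ B, one has the inequality ‖Σ_{k=1}^n T(x_k)·b_k‖² ≤ ‖Σ_{k=1}^n S(T(x_k))·b_k‖ · ‖Σ_{k=1}^n x_k·b_k‖, the first norm taken in Z and the last two in W. -/

import Mathlib

/-!
Expanding both sides sesquilinearly and applying the adjoint relation term by term gives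
`⟪Σ T(xₖ)·bₖ, Σ T(xₖ)·bₖ⟫ = ⟪Σ xₖ·bₖ, Σ S(T(xₖ))·bₖ⟫`, so the claim is the Cauchy–Schwarz
inequality `‖⟪v, w⟫‖ ≤ ‖v‖ ‖w‖` in `W`.
-/

open scoped InnerProductSpace RightActions

/-- The Hilbert C⋆-module class as in the older Mathlib: a right `A`-module structure (via
`Aᵐᵒᵖ`) with an `A`-valued inner product satisfying `⟪x, y <• a⟫ = ⟪x, y⟫ * a`. -/
class RightCStarModule (A : outParam <| Type*) (E : Type*) [NonUnitalSemiring A] [StarRing A]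
    [Module ℂ A] [AddCommGroup E] [Module ℂ E] [PartialOrder A] [SMul Aᵐᵒᵖ E] [Norm A] [Norm E]
    extends Inner A E where
  inner_add_right {x} {y} {z} : inner x (y + z) = inner x y + inner x z
  inner_self_nonneg {x} : 0 ≤ inner x x
  inner_self {x} : inner x x = 0 ↔ x = 0
  inner_op_smul_right {a : A} {x y : E} : inner x (y <• a) = inner x y * a
  inner_smul_right_complex {z : ℂ} {x} {y} : inner x (z • y) = z • inner x y
  star_inner x y : star (inner x y) = inner y x
  norm_eq_sqrt_norm_inner_self x : ‖x‖ = √‖inner x x‖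

namespace RightCStarModule

variable {A E : Type*} [NonUnitalCStarAlgebra A] [PartialOrder A] [AddCommGroup E]
  [Module ℂ E] [SMul Aᵐᵒᵖ E] [Norm E] [RightCStarModule A E]

open MulOpposite

/-- A right Hilbert `A`-module is a (left) Hilbert `Aᵐᵒᵖ`-module for the inner product
`op ⟪x, y⟫_A`; this gives access to Mathlib's theory of `CStarModule`. -/
abbrev toCStarModuleMulOpposite : CStarModule Aᵐᵒᵖ E where
  inner x y := op ⟪x, y⟫_A
  inner_add_right := by simp [inner_add_right]
  inner_self_nonneg := inner_self_nonneg (A := A)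
  inner_self := by simp [inner_self (A := A)]
  inner_op_smul_right {a x y} := by rw [← op_unop a, ← op_mul, ← inner_op_smul_right]
  inner_smul_right_complex := by simp [inner_smul_right_complex]
  star_inner x y := by rw [← op_star, star_inner]
  norm_eq_sqrt_norm_inner_self := norm_eq_sqrt_norm_inner_self (A := A)

lemma inner_sum_op_smul_sum_op_smul {ι κ : Type*} (s : Finset ι) (t : Finset κ)
    (u : ι → E) (v : κ → E) (b : ι → A) (c : κ → A) :
    ⟪∑ i ∈ s, u i <• b i, ∑ j ∈ t, v j <• c j⟫_A =
      ∑ i ∈ s, ∑ j ∈ t, star (b i) * ⟪u i, v j⟫_A * c j := by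
  let _ := toCStarModuleMulOpposite (A := A) (E := E)
  apply op_injective
  change inner Aᵐᵒᵖ (∑ i ∈ s, op (b i) • u i) (∑ j ∈ t, op (c j) • v j) = _
  simp only [CStarModule.inner_sum_left, CStarModule.inner_sum_right,
    CStarModule.inner_op_smul_left, CStarModule.inner_op_smul_right, Finset.op_sum,
    Finset.mul_sum, op_mul, op_star]
  rw [Finset.sum_comm]
  rfl

lemma norm_sq_eq_norm_inner_self (x : E) : ‖x‖ ^ 2 = ‖⟪x, x⟫_A‖ := by
  rw [norm_eq_sqrt_norm_inner_self (A := A), Real.sq_sqrt (norm_nonneg _)]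

lemma norm_inner_le [StarOrderedRing A] (x y : E) : ‖⟪x, y⟫_A‖ ≤ ‖x‖ * ‖y‖ :=
  let _ := toCStarModuleMulOpposite (A := A) (E := E)
  CStarModule.norm_inner_le E (A := Aᵐᵒᵖ)

end RightCStarModule

theorem norm_sq_sum_smul_le_of_adjoint_relation_general
    {B W Z : Type*}
    [NonUnitalCStarAlgebra B] [PartialOrder B] [StarOrderedRing B]
    [NormedAddCommGroup W] [NormedSpace ℂ W] [SMul Bᵐᵒᵖ W] [RightCStarModule B W]
    [NormedAddCommGroup Z] [NormedSpace ℂ Z] [SMul Bᵐᵒᵖ Z] [RightCStarModule B Z]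
    (X : Submodule ℂ W) (Y : Submodule ℂ Z)
    (T : X → Y) (S : Y → X)
    (h : ∀ (x : X) (y : Y), ⟪(T x : Z), (y : Z)⟫_B = ⟪(x : W), (S y : W)⟫_B)
    (n : ℕ) (x : Fin n → X) (b : Fin n → B) :
    ‖∑ k, ((T (x k) : Z) <• b k)‖ ^ 2 ≤
      ‖∑ k, ((S (T (x k)) : W) <• b k)‖ * ‖∑ k, ((x k : W) <• b k)‖ := by
  have inner_self_eq : ⟪∑ k, (T (x k) : Z) <• b k, ∑ k, (T (x k) : Z) <• b k⟫_B =
      ⟪∑ k, (x k : W) <• b k, ∑ k, (S (T (x k)) : W) <• b k⟫_B := by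
    simp only [RightCStarModule.inner_sum_op_smul_sum_op_smul, h]
  calc ‖∑ k, (T (x k) : Z) <• b k‖ ^ 2
      = ‖⟪∑ k, (x k : W) <• b k, ∑ k, (S (T (x k)) : W) <• b k⟫_B‖ := by
        rw [RightCStarModule.norm_sq_eq_norm_inner_self, inner_self_eq]
    _ ≤ ‖∑ k, (x k : W) <• b k‖ * ‖∑ k, (S (T (x k)) : W) <• b k‖ :=
        RightCStarModule.norm_inner_le _ _
    _ = _ := mul_comm _ _

theorem norm_sq_sum_smul_le_of_adjoint_relation
    {B W Z : Type*}
    [NonUnitalCStarAlgebra B] [PartialOrder B] [StarOrderedRing B]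
    [NormedAddCommGroup W] [NormedSpace ℂ W] [SMul Bᵐᵒᵖ W] [RightCStarModule B W]
    [CompleteSpace W]
    [NormedAddCommGroup Z] [NormedSpace ℂ Z] [SMul Bᵐᵒᵖ Z] [RightCStarModule B Z]
    [CompleteSpace Z]
    (X : Submodule ℂ W) (Y : Submodule ℂ Z)
    (T : X → Y) (S : Y → X)
    (h : ∀ (x : X) (y : Y), ⟪(T x : Z), (y : Z)⟫_B = ⟪(x : W), (S y : W)⟫_B)
    (n : ℕ) (x : Fin n → X) (b : Fin n → B) :
    ‖∑ k, ((T (x k) : Z) <• b k)‖ ^ 2 ≤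
      ‖∑ k, ((S (T (x k)) : W) <• b k)‖ * ‖∑ k, ((x k : W) <• b k)‖ :=
  norm_sq_sum_smul_le_of_adjoint_relation_general X Y T S h n x b
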